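/- arXiv:1412.3340 — 10 statements merged into one kernel-verified Lean document; each statement's English description precedes it below -/
import Mathlib

section
/- On a finite graph, if u : V × I → (0,∞) is continuously differentiable in time and solves the heat equation at time t₀ (Δu = ∂_t u at t₀), then the key identity 𝓛(−u·Δ^ψ u)(·,t₀) = 2u·Γ₂^ψ(u)(·,t₀) holds, where 𝓛 = Δ − ∂_t. -/
noncomputable section

open Finset Filter

variable {V : Type*} [Fintype V]

/-- Graph Laplacian `Δf(v) = Σ_{w∼v} (f w − f v)`. -/
def lap (Adj : V → V → Prop) [DecidableRel Adj] (f : V → ℝ) (v : V) : ℝ :=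
  ∑ w, if Adj v w then f w - f v else 0

/-- ψ-Laplacian `(Δ^ψ f)(v) = Δ[ψ(f/f v)](v)`. -/
def psiLap (Adj : V → V → Prop) [DecidableRel Adj] (ψ : ℝ → ℝ) (f : V → ℝ) (v : V) : ℝ :=
  lap Adj (fun w => ψ (f w / f v)) v

/-- `ψ̄(x) = ψ'(1)(x−1) − (ψ x − ψ 1)`. -/
def psibar (ψ : ℝ → ℝ) (x : ℝ) : ℝ := deriv ψ 1 * (x - 1) - (ψ x - ψ 1)

/-- ψ-gradient `Γ^ψ = Δ^{ψ̄}`. -/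
def gammaPsi (Adj : V → V → Prop) [DecidableRel Adj] (ψ : ℝ → ℝ) (f : V → ℝ) (v : V) : ℝ :=
  lap Adj (fun w => psibar ψ (f w / f v)) v

/-- `(Ω^ψ f)(v)`. -/
def omegaPsi (Adj : V → V → Prop) [DecidableRel Adj] (ψ : ℝ → ℝ) (f : V → ℝ) (v : V) : ℝ :=
  lap Adj (fun w => deriv ψ (f w / f v) * (f w / f v) *
    (lap Adj f w / f w - lap Adj f v / f v)) v

/-- Second ψ-gradient `Γ₂^ψ`. -/
def gamma2Psi (Adj : V → V → Prop) [DecidableRel Adj] (ψ : ℝ → ℝ) (f : V → ℝ) (v : V) : ℝ :=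
  (omegaPsi Adj ψ f v + lap Adj f v * psiLap Adj ψ f v / f v
    - lap Adj (fun w => f w * psiLap Adj ψ f w) v / f v) / 2

/-- Classical gradient form `Γ(f) = (Δ(f²) − 2fΔf)/2`. -/
def gammaF (Adj : V → V → Prop) [DecidableRel Adj] (f : V → ℝ) (v : V) : ℝ :=
  (lap Adj (fun w => f w * f w) v - 2 * f v * lap Adj f v) / 2

/-- Bilinear gradient form `Γ(f,g)`. -/
def gammaBil (Adj : V → V → Prop) [DecidableRel Adj] (f g : V → ℝ) (v : V) : ℝ :=
  (lap Adj (fun w => f w * g w) v - f v * lap Adj g v - g v * lap Adj f v) / 2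

/-- Second gradient form `Γ₂(f) = (ΔΓ(f) − 2Γ(f,Δf))/2`. -/
def gamma2F (Adj : V → V → Prop) [DecidableRel Adj] (f : V → ℝ) (v : V) : ℝ :=
  (lap Adj (gammaF Adj f) v - 2 * gammaBil Adj f (lap Adj f) v) / 2

/-! Differentiating `Δ^ψ u(v) = Σ_{w∼v} (ψ(u_w/u_v) − ψ(1))` in time term by term, the quotient
rule in logarithmic form gives `∂ₜ ψ(u_w/u_v) = ψ'(r) r (∂ₜu_w/u_w − ∂ₜu_v/u_v)` with
`r = u_w/u_v`, and under the heat equation `∂ₜu = Δu` this is exactly the summand of `Ω^ψ u`.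
Hence `∂ₜ(u Δ^ψ u) = Δu Δ^ψ u + u Ω^ψ u`, and the identity is the definition of `Γ₂^ψ`
multiplied by `2u`. -/

theorem hasDerivAt_comp_div_log {ψ p q : ℝ → ℝ} {p' q' t : ℝ}
    (hψ : DifferentiableAt ℝ ψ (p t / q t)) (hp : HasDerivAt p p' t) (hq : HasDerivAt q q' t)
    (hp0 : p t ≠ 0) (hq0 : q t ≠ 0) :
    HasDerivAt (fun s => ψ (p s / q s))
      (deriv ψ (p t / q t) * (p t / q t) * (p' / p t - q' / q t)) t :=
  (hψ.hasDerivAt.comp t (hp.div hq hq0)).congr_deriv (by field_simp)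

section

variable {Adj : V → V → Prop} [DecidableRel Adj]

theorem lap_neg (f : V → ℝ) (v : V) : lap Adj (fun w => -f w) v = -lap Adj f v := by
  simp only [lap, ← sum_neg_distrib]
  exact sum_congr rfl fun w _ => by split_ifs <;> ring

theorem hasDerivAt_lap {g : ℝ → V → ℝ} {g' : V → ℝ} {t₀ : ℝ}
    (hg : ∀ w, HasDerivAt (fun t => g t w) (g' w) t₀) (v : V) :
    HasDerivAt (fun t => lap Adj (g t) v) (lap Adj g' v) t₀ := by
  refine HasDerivAt.fun_sum fun w _ => ?_
  by_cases h : Adj v w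
  · simpa only [h, if_true] using (hg w).fun_sub (hg v)
  · simpa only [h, if_false] using hasDerivAt_const t₀ (0 : ℝ)

theorem hasDerivAt_psiLap {ψ : ℝ → ℝ} (hψ : ∀ x, 0 < x → DifferentiableAt ℝ ψ x)
    {u : V → ℝ → ℝ} {u' : V → ℝ} {t₀ : ℝ}
    (hpos : ∀ v, 0 < u v t₀) (hu : ∀ v, HasDerivAt (u v) (u' v) t₀) (v : V) :
    HasDerivAt (fun t => psiLap Adj ψ (fun z => u z t) v)
      (lap Adj (fun w => deriv ψ (u w t₀ / u v t₀) * (u w t₀ / u v t₀) *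
        (u' w / u w t₀ - u' v / u v t₀)) v) t₀ :=
  hasDerivAt_lap (fun w => hasDerivAt_comp_div_log (hψ _ (div_pos (hpos w) (hpos v)))
    (hu w) (hu v) (hpos w).ne' (hpos v).ne') v

theorem two_mul_mul_gamma2Psi (ψ : ℝ → ℝ) {f : V → ℝ} {v : V} (hf : f v ≠ 0) :
    2 * f v * gamma2Psi Adj ψ f v
      = f v * omegaPsi Adj ψ f v + lap Adj f v * psiLap Adj ψ f v
        - lap Adj (fun w => f w * psiLap Adj ψ f w) v := by
  unfold gamma2Psi
  field_simp

end

theorem key_identity_general (Adj : V → V → Prop) [DecidableRel Adj]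
    (ψ : ℝ → ℝ) (hψ : ContDiffOn ℝ 1 ψ (Set.Ioi 0))
    (u : V → ℝ → ℝ) (t₀ : ℝ)
    (hpos : ∀ v t, 0 < u v t)
    (hdiff : ∀ v, DifferentiableAt ℝ (u v) t₀)
    (hheat : ∀ v, deriv (u v) t₀ = lap Adj (fun w => u w t₀) v)
    (v : V) :
    lap Adj (fun w => -(u w t₀ * psiLap Adj ψ (fun z => u z t₀) w)) v
      - deriv (fun t => -(u v t * psiLap Adj ψ (fun z => u z t) v)) t₀
    = 2 * u v t₀ * gamma2Psi Adj ψ (fun z => u z t₀) v := by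
  have hψd : ∀ x, 0 < x → DifferentiableAt ℝ ψ x := fun x hx =>
    (hψ.contDiffAt (isOpen_Ioi.mem_nhds hx)).differentiableAt one_ne_zero
  have hu : ∀ w, HasDerivAt (u w) (lap Adj (fun z => u z t₀) w) t₀ := fun w =>
    hheat w ▸ (hdiff w).hasDerivAt
  have hΩ : HasDerivAt (fun t => psiLap Adj ψ (fun z => u z t) v)
      (omegaPsi Adj ψ (fun z => u z t₀) v) t₀ :=
    hasDerivAt_psiLap hψd (fun w => hpos w t₀) hu v
  rw [((hu v).fun_mul hΩ).fun_neg.deriv, lap_neg,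
    two_mul_mul_gamma2Psi ψ (f := fun z => u z t₀) (hpos v t₀).ne']
  ring

/-- Key identity: `𝓛(−u·Δ^ψ u)(·,t₀) = 2u·Γ₂^ψ(u)(·,t₀)` for solutions of the heat
equation at time `t₀`, where `𝓛 = Δ − ∂_t`. -/
theorem key_identity (Adj : V → V → Prop) [DecidableRel Adj]
    (hsymm : Symmetric Adj) (hloop : ∀ v, ¬Adj v v)
    (ψ : ℝ → ℝ) (hψ : ContDiffOn ℝ 1 ψ (Set.Ioi 0))
    (u : V → ℝ → ℝ) (t₀ : ℝ)
    (hpos : ∀ v t, 0 < u v t)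
    (hdiff : ∀ v, DifferentiableAt ℝ (u v) t₀)
    (hheat : ∀ v, deriv (u v) t₀ = lap Adj (fun w => u w t₀) v)
    (v : V) :
    lap Adj (fun w => -(u w t₀ * psiLap Adj ψ (fun z => u z t₀) w)) v
      - deriv (fun t => -(u v t * psiLap Adj ψ (fun z => u z t) v)) t₀
    = 2 * u v t₀ * gamma2Psi Adj ψ (fun z => u z t₀) v :=
  key_identity_general Adj ψ hψ u t₀ hpos hdiff hheat v
end
end

section
/- On a finite graph, for ψ ∈ C²((0,∞)) and any f : V → ℝ, the pointwise limit lim_{ε→0} (1/ε²)·Γ^ψ(1+εf) = −ψ''(1)·Γ(f) holds, where Γ^ψ = Δ^{ψ̄} with ψ̄(x) = ψ'(1)(x−1) − (ψ(x)−ψ(1)) and Γ(f) = (Δ(f²) − 2fΔf)/2. -/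
/-!
Since `ψ̄ 1 = ψ̄' 1 = 0` and `ψ̄'' 1 = -ψ'' 1`, Taylor's theorem gives
`ψ̄ (1 + h) = -ψ''(1) h² / 2 + o(h²)`. For `g = 1 + ε f` the ratio `g w / g v` is
`1 + ε q` with `q = (f w - f v) / (1 + ε f v) → f w - f v`, so every edge term of
`ε⁻² Γ^ψ(g)(v)` tends to `-ψ''(1) (f w - f v)² / 2`; summing over the neighbours of `v`
gives `-ψ''(1) Γ(f)(v)`, because `Δ[(f - f v)²](v) = 2 Γ(f)(v)`.
-/

noncomputable section

open Finset Filter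

variable {V : Type*} [Fintype V]

open Topology Asymptotics

theorem ContDiffAt.isLittleO_sub_taylor_two {f : ℝ → ℝ} {x : ℝ} (hf : ContDiffAt ℝ 2 f x) :
    (fun y => f y - (f x + deriv f x * (y - x) + deriv (deriv f) x / 2 * (y - x) ^ 2))
      =o[𝓝 x] fun y => (y - x) ^ 2 := by
  obtain ⟨u, hu, hfu⟩ := hf.contDiffOn le_rfl (by simp)
  obtain ⟨r, hr, hball⟩ := Metric.mem_nhds_iff.mp hu
  have hx : x ∈ Metric.ball x r := Metric.mem_ball_self hr
  have htaylor := taylor_isLittleO (convex_ball x r) hx (hfu.mono hball)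
  rw [nhdsWithin_eq_nhds.mpr (Metric.isOpen_ball.mem_nhds hx)] at htaylor
  refine htaylor.congr_left fun y => ?_
  have h1 : derivWithin f (Metric.ball x r) x = deriv f x :=
    derivWithin_of_isOpen Metric.isOpen_ball hx
  have h2 : iteratedDerivWithin 2 f (Metric.ball x r) x = deriv (deriv f) x := by
    rw [iteratedDerivWithin_of_isOpen Metric.isOpen_ball hx, iteratedDeriv_succ, iteratedDeriv_one]
  simp [taylor_within_apply, h1, h2]
  ring

section Psibar

variable {ψ : ℝ → ℝ}

theorem isLittleO_psibar_add (hψ : ContDiffAt ℝ 2 ψ 1) :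
    (fun y => psibar ψ y + deriv (deriv ψ) 1 / 2 * (y - 1) ^ 2) =o[𝓝 1] fun y => (y - 1) ^ 2 :=
  hψ.isLittleO_sub_taylor_two.neg_left.congr_left fun y => by unfold psibar; ring

theorem tendsto_psibar_div_div_sq (hψ : ContDiffAt ℝ 2 ψ 1) (a b : ℝ) :
    Tendsto (fun ε => psibar ψ ((1 + ε * a) / (1 + ε * b)) / ε ^ 2) (𝓝[≠] 0)
      (𝓝 (-(deriv (deriv ψ) 1) / 2 * (a - b) ^ 2)) := by
  set q : ℝ → ℝ := fun ε => (a - b) / (1 + ε * b)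
  have hq : Tendsto q (𝓝 0) (𝓝 (a - b)) := by
    have : ContinuousAt q 0 := continuousAt_const.div (by fun_prop) (by simp)
    simpa [q] using this.tendsto
  have hquot : ∀ᶠ ε in 𝓝 (0 : ℝ), (1 + ε * a) / (1 + ε * b) = 1 + ε * q ε := by
    have : ∀ᶠ ε in 𝓝 (0 : ℝ), 1 + ε * b ≠ 0 :=
      (show ContinuousAt (fun ε : ℝ => 1 + ε * b) 0 by fun_prop).eventually_ne (by simp)
    filter_upwards [this] with ε hε
    simp only [q]
    field_simp
    ring
  have hq_one : Tendsto (fun ε => 1 + ε * q ε) (𝓝 0) (𝓝 1) := by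
    simpa using tendsto_const_nhds.add (tendsto_id.mul hq)
  have hrem : (fun ε => psibar ψ (1 + ε * q ε) + deriv (deriv ψ) 1 / 2 * (ε * q ε) ^ 2)
      =o[𝓝 0] fun ε => ε ^ 2 := by
    have hbig : (fun ε => (ε * q ε) ^ 2) =O[𝓝 0] fun ε => ε ^ 2 := by
      simpa [mul_pow] using
        (isBigO_refl (fun ε : ℝ => ε ^ 2) (𝓝 0)).mul ((hq.pow 2).isBigO_one (F := ℝ))
    have htaylor := (isLittleO_psibar_add hψ).comp_tendsto hq_one
    simp only [Function.comp_def, add_sub_cancel_left] at htaylor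
    exact htaylor.trans_isBigO hbig
  have hlim := hrem.tendsto_div_nhds_zero.sub ((hq.pow 2).const_mul (deriv (deriv ψ) 1 / 2))
  rw [zero_sub, ← neg_mul, ← neg_div] at hlim
  refine (hlim.mono_left nhdsWithin_le_nhds).congr' ?_
  filter_upwards [self_mem_nhdsWithin, nhdsWithin_le_nhds hquot] with ε hε hεq
  rw [hεq]
  have hε : ε ≠ 0 := hε
  field_simp
  ring

end Psibar

section Laplacian

variable (Adj : V → V → Prop) [DecidableRel Adj]

theorem lap_const_mul (c : ℝ) (f : V → ℝ) (v : V) :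
    lap Adj (fun w => c * f w) v = c * lap Adj f v := by
  simp only [lap, mul_sum, ← mul_sub, mul_ite, mul_zero]

theorem continuous_lap (v : V) : Continuous fun f : V → ℝ => lap Adj f v := by
  refine continuous_finsetSum _ fun w _ => ?_
  split_ifs <;> fun_prop

theorem lap_sub_sq_eq_two_mul_gammaF (f : V → ℝ) (v : V) :
    lap Adj (fun w => (f w - f v) ^ 2) v = 2 * gammaF Adj f v := by
  simp only [gammaF, lap, mul_sum, ← sum_sub_distrib]
  rw [mul_div_cancel₀ _ two_ne_zero]
  refine sum_congr rfl fun w _ => ?_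
  split_ifs <;> ring

end Laplacian

theorem gammaPsi_limit_general (Adj : V → V → Prop) [DecidableRel Adj]
    (ψ : ℝ → ℝ) (hψ : ContDiffOn ℝ 2 ψ (Set.Ioi 0))
    (f : V → ℝ) (v : V) :
    Tendsto (fun ε : ℝ => (1 / ε ^ 2) * gammaPsi Adj ψ (fun w => 1 + ε * f w) v)
      (nhdsWithin 0 {0}ᶜ) (nhds (-(deriv (deriv ψ) 1) * gammaF Adj f v)) := by
  have hψ1 : ContDiffAt ℝ 2 ψ 1 := hψ.contDiffAt (Ioi_mem_nhds one_pos)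
  have hedges : Tendsto (fun ε w => psibar ψ ((1 + ε * f w) / (1 + ε * f v)) / ε ^ 2) (𝓝[≠] 0)
      (𝓝 fun w => -(deriv (deriv ψ) 1) / 2 * (f w - f v) ^ 2) :=
    tendsto_pi_nhds.mpr fun w => tendsto_psibar_div_div_sq hψ1 (f w) (f v)
  have hlim := ((continuous_lap Adj v).tendsto _).comp hedges
  rw [lap_const_mul, lap_sub_sq_eq_two_mul_gammaF, div_mul_comm,
    mul_div_cancel_left₀ _ two_ne_zero, mul_comm] at hlim
  refine hlim.congr fun ε => ?_
  simp only [Function.comp_apply, div_eq_inv_mul, lap_const_mul, gammaPsi, mul_one]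

/-- Limit of the ψ-gradient: `(1/ε²)·Γ^ψ(1+εf) → −ψ''(1)·Γ(f)` as `ε → 0`. -/
theorem gammaPsi_limit (Adj : V → V → Prop) [DecidableRel Adj]
    (hsymm : Symmetric Adj) (hloop : ∀ v, ¬Adj v v)
    (ψ : ℝ → ℝ) (hψ : ContDiffOn ℝ 2 ψ (Set.Ioi 0))
    (f : V → ℝ) (v : V) :
    Tendsto (fun ε : ℝ => (1 / ε ^ 2) * gammaPsi Adj ψ (fun w => 1 + ε * f w) v)
      (nhdsWithin 0 {0}ᶜ) (nhds (-(deriv (deriv ψ) 1) * gammaF Adj f v)) :=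
  gammaPsi_limit_general Adj ψ hψ f v
end
end

section
/- If a finite graph G satisfies CDψ(d,0) for some concave ψ ∈ C²((0,∞)) with ψ'(1) ≠ 0 and ψ''(1) ≠ 0, then G satisfies the classical curvature-dimension condition CD(d', 0) with d' = (−ψ''(1)/ψ'(1)²)·d, i.e. Γ₂(f) ≥ (1/d')(Δf)² for all f : V → ℝ. -/
/-
Test `CDψ(d,0)` on `1 + εf` and let `ε → 0`. Writing `ψ x = ψ 1 + ψ'(1)(x - 1) + E(x)(x - 1)²`
and `x ψ'(x) = ψ'(1) + Q(x)(x - 1)` with divided differences `E → ψ''(1)/2`, `Q → ψ'(1) + ψ''(1)`,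
one finds `Δ^ψ(1 + εf) = ε ψ'(1) Δf + O(ε²)` and, once the first-order terms cancel,
`Γ₂^ψ(1 + εf) = -ε² ψ''(1) Γ₂(f) + o(ε²)`. Dividing the `CDψ` inequality by `ε²` gives
`(1/d) ψ'(1)² (Δf)² ≤ -ψ''(1) Γ₂(f)`, and concavity makes `ψ''(1) < 0`.
-/

noncomputable section

open Finset Filter

variable {V : Type*} [Fintype V]

open Topology

theorem ConcaveOn.deriv_deriv_nonpos {f : ℝ → ℝ} {s : Set ℝ} {x : ℝ} (hf : ConcaveOn ℝ s f)
    (hs : s ∈ 𝓝 x) (hd : ∀ y ∈ s, DifferentiableAt ℝ f y) : deriv (deriv f) x ≤ 0 := by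
  rw [← derivWithin_of_mem_nhds hs]
  exact (hf.antitoneOn_deriv hd).derivWithin_nonpos

theorem sq_sub_mul_dslope_dslope {𝕜 : Type*} [NontriviallyNormedField 𝕜] (f : 𝕜 → 𝕜) (a x : 𝕜) :
    (x - a) ^ 2 * dslope (dslope f a) a x = f x - f a - deriv f a * (x - a) := by
  have h1 := sub_smul_dslope f a x
  have h2 := sub_smul_dslope (dslope f a) a x
  rw [smul_eq_mul] at h1
  rw [dslope_same, smul_eq_mul] at h2
  linear_combination (x - a) * h2 + h1

/-- L'Hôpital's rule applied to `(f x - f a - f' a (x - a)) / (x - a) ^ 2`. -/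
theorem hasDerivAt_dslope_same {f : ℝ → ℝ} {a : ℝ} (hf : ∀ᶠ x in 𝓝 a, DifferentiableAt ℝ f x)
    (hf' : DifferentiableAt ℝ (deriv f) a) :
    HasDerivAt (dslope f a) (deriv (deriv f) a / 2) a := by
  rw [hasDerivAt_iff_tendsto_slope]
  have hlh : Tendsto (fun x => (f x - f a - deriv f a * (x - a)) / (x - a) ^ 2) (𝓝[≠] a)
      (𝓝 (deriv (deriv f) a / 2)) := by
    refine HasDerivAt.lhopital_zero_nhdsNE (f' := fun x => deriv f x - deriv f a)
      (g' := fun x => 2 * (x - a)) ?_ ?_ ?_ ?_ ?_ ?_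
    · filter_upwards [nhdsWithin_le_nhds hf] with x hx
      simpa using ((hx.hasDerivAt.sub_const (f a)).fun_sub
        (((hasDerivAt_id x).sub_const a).const_mul (deriv f a)))
    · exact .of_forall fun x => by simpa using ((hasDerivAt_id x).sub_const a).fun_pow 2
    · filter_upwards [self_mem_nhdsWithin] with x (hx : x ≠ a)
      simpa [sub_eq_zero] using hx
    · have : ContinuousAt (fun x => f x - f a - deriv f a * (x - a)) a := by
        have := hf.self_of_nhds.continuousAt
        fun_prop
      simpa using this.tendsto.mono_left nhdsWithin_le_nhds
    · have : ContinuousAt (fun x : ℝ => (x - a) ^ 2) a := by fun_prop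
      simpa using this.tendsto.mono_left nhdsWithin_le_nhds
    · refine ((hasDerivAt_iff_tendsto_slope.1 hf'.hasDerivAt).div_const 2).congr' ?_
      filter_upwards [self_mem_nhdsWithin] with x (hx : x ≠ a)
      have : x - a ≠ 0 := sub_ne_zero.2 hx
      rw [slope_def_field]
      field_simp
  refine hlh.congr' ?_
  filter_upwards [self_mem_nhdsWithin] with x (hx : x ≠ a)
  have : x - a ≠ 0 := sub_ne_zero.2 hx
  rw [slope_def_field, dslope_of_ne f hx, slope_def_field, dslope_same]
  field_simp

@[fun_prop]
theorem continuousAt_finsetSum {ι X M : Type*} [TopologicalSpace X] [TopologicalSpace M]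
    [AddCommMonoid M] [ContinuousAdd M] (s : Finset ι) {f : ι → X → M} {x : X}
    (h : ∀ i ∈ s, ContinuousAt (f i) x) : ContinuousAt (fun a => ∑ i ∈ s, f i a) x :=
  tendsto_finsetSum s h

theorem eventually_one_add_smul_pos {ι : Type*} [Finite ι] (f : ι → ℝ) :
    ∀ᶠ ε in 𝓝 (0 : ℝ), ∀ u, 0 < (1 + ε • f) u := by
  rw [eventually_all]
  intro u
  have : Tendsto (fun ε : ℝ => 1 + ε * f u) (𝓝 0) (𝓝 (1 + 0 * f u)) :=
    tendsto_const_nhds.add (tendsto_id.mul_const (f u))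
  rw [zero_mul, add_zero] at this
  simpa using this.eventually (eventually_gt_nhds one_pos)

theorem continuousAt_ratio_one_add_smul {ι : Type*} (f : ι → ℝ) (x u : ι) {F : ℝ → ℝ}
    (hF : ContinuousAt F 1) :
    ContinuousAt (fun ε : ℝ => F ((1 + ε • f) x / (1 + ε • f) u)) 0 := by
  refine hF.comp_of_eq ?_ (by simp)
  simp only [Pi.add_apply, Pi.one_apply, Pi.smul_apply, smul_eq_mul]
  fun_prop (disch := simp)

section Graph

variable {Adj : V → V → Prop} [DecidableRel Adj]

theorem lap_eq_sum (F : V → ℝ) (u : V) :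
    lap Adj F u = ∑ x ∈ univ.filter (Adj u), (F x - F u) :=
  (sum_filter _ _).symm

theorem lap_one_add_smul (f : V → ℝ) (ε : ℝ) (u : V) :
    lap Adj (1 + ε • f) u = ε * lap Adj f u := by
  simp only [lap_eq_sum, mul_sum, Pi.add_apply, Pi.one_apply, Pi.smul_apply, smul_eq_mul]
  exact sum_congr rfl fun _ _ => by ring

theorem two_mul_gammaBil_eq (f g : V → ℝ) (v : V) :
    2 * gammaBil Adj f g v = ∑ w ∈ univ.filter (Adj v), (f w - f v) * (g w - g v) := by
  simp only [gammaBil, lap_eq_sum, mul_sum, ← sum_sub_distrib]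
  rw [mul_div_cancel₀ _ two_ne_zero]
  exact sum_congr rfl fun _ _ => by ring

theorem two_mul_gammaF_eq (f : V → ℝ) (u : V) :
    2 * gammaF Adj f u = ∑ x ∈ univ.filter (Adj u), (f x - f u) ^ 2 := by
  simp only [gammaF, lap_eq_sum, mul_sum, ← sum_sub_distrib]
  rw [mul_div_cancel₀ _ two_ne_zero]
  exact sum_congr rfl fun _ _ => by ring

theorem two_mul_gamma2F_eq (f : V → ℝ) (v : V) :
    2 * gamma2F Adj f v = ∑ w ∈ univ.filter (Adj v),
      (gammaF Adj f w - gammaF Adj f v - (f w - f v) * (lap Adj f w - lap Adj f v)) := by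
  rw [gamma2F, mul_div_cancel₀ _ two_ne_zero, two_mul_gammaBil_eq, lap_eq_sum, ← sum_sub_distrib]

theorem psiLap_eq (ψ : ℝ → ℝ) (h : V → ℝ) {u : V} (hu : h u ≠ 0) :
    psiLap Adj ψ h u = deriv ψ 1 * lap Adj h u / h u +
      ∑ x ∈ univ.filter (Adj u), dslope (dslope ψ 1) 1 (h x / h u) * ((h x - h u) / h u) ^ 2 := by
  rw [psiLap, lap_eq_sum, lap_eq_sum, mul_sum, sum_div, ← sum_add_distrib]
  refine sum_congr rfl fun x _ => ?_
  have hr : h x / h u - 1 = (h x - h u) / h u := by field_simp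
  rw [div_self hu, mul_div_assoc, ← hr]
  linear_combination (sq_sub_mul_dslope_dslope ψ 1 (h x / h u)).symm

theorem omegaPsi_eq (ψ : ℝ → ℝ) (h : V → ℝ) {v : V} (hv : h v ≠ 0) :
    omegaPsi Adj ψ h v = ∑ w ∈ univ.filter (Adj v),
      (deriv ψ 1 + dslope (fun x => x * deriv ψ x) 1 (h w / h v) * ((h w - h v) / h v)) *
        (lap Adj h w / h w - lap Adj h v / h v) := by
  rw [omegaPsi, lap_eq_sum]
  refine sum_congr rfl fun w _ => ?_
  have hQ := sub_smul_dslope (fun x => x * deriv ψ x) 1 (h w / h v)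
  have hr : h w / h v - 1 = (h w - h v) / h v := by field_simp
  rw [sub_self, mul_zero, sub_zero, ← hr]
  simp only [smul_eq_mul, one_mul] at hQ
  linear_combination -(lap Adj h w / h w - lap Adj h v / h v) * hQ

def psiLapRem (Adj : V → V → Prop) [DecidableRel Adj] (ψ : ℝ → ℝ) (f : V → ℝ) (ε : ℝ) (u : V) :
    ℝ :=
  ∑ x ∈ univ.filter (Adj u),
    dslope (dslope ψ 1) 1 ((1 + ε • f) x / (1 + ε • f) u) * ((f x - f u) / (1 + ε • f) u) ^ 2

def psiLapQuot (Adj : V → V → Prop) [DecidableRel Adj] (ψ : ℝ → ℝ) (f : V → ℝ) (ε : ℝ) (u : V) :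
    ℝ :=
  deriv ψ 1 * lap Adj f u / (1 + ε • f) u + ε * psiLapRem Adj ψ f ε u

theorem psiLap_one_add_smul (ψ : ℝ → ℝ) (f : V → ℝ) {ε : ℝ} {u : V} (hu : (1 + ε • f) u ≠ 0) :
    psiLap Adj ψ (1 + ε • f) u = ε * psiLapQuot Adj ψ f ε u := by
  rw [psiLap_eq ψ _ hu, lap_one_add_smul, psiLapQuot, psiLapRem, mul_add, mul_sum, mul_sum]
  congr 1
  · ring
  · refine sum_congr rfl fun x _ => ?_
    simp only [Pi.add_apply, Pi.one_apply, Pi.smul_apply, smul_eq_mul]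
    ring

def gamma2PsiQuot (Adj : V → V → Prop) [DecidableRel Adj] (ψ : ℝ → ℝ) (f : V → ℝ) (ε : ℝ)
    (v : V) : ℝ :=
  ((∑ w ∈ univ.filter (Adj v),
      (deriv ψ 1 * lap Adj f w * (f v - f w) / ((1 + ε • f) w * (1 + ε • f) v)
        + dslope (fun x => x * deriv ψ x) 1 ((1 + ε • f) w / (1 + ε • f) v)
            * (f w - f v) / (1 + ε • f) v
            * (lap Adj f w / (1 + ε • f) w - lap Adj f v / (1 + ε • f) v)
        - ((1 + ε • f) w * psiLapRem Adj ψ f ε w - (1 + ε • f) v * psiLapRem Adj ψ f ε v)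
            / (1 + ε • f) v))
    + lap Adj f v * psiLapQuot Adj ψ f ε v / (1 + ε • f) v) / 2

theorem gamma2Psi_one_add_smul (ψ : ℝ → ℝ) (f : V → ℝ) {ε : ℝ} (hg : ∀ u, (1 + ε • f) u ≠ 0)
    (v : V) : gamma2Psi Adj ψ (1 + ε • f) v = ε ^ 2 * gamma2PsiQuot Adj ψ f ε v := by
  have hΔψ : (fun w => (1 + ε • f) w * psiLap Adj ψ (1 + ε • f) w)
      = fun w => (1 + ε • f) w * (ε * psiLapQuot Adj ψ f ε w) := by
    funext w
    rw [psiLap_one_add_smul ψ f (hg w)]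
  have hv := hg v
  rw [gamma2Psi, gamma2PsiQuot, hΔψ, omegaPsi_eq ψ _ hv, psiLap_one_add_smul ψ f hv,
    lap_eq_sum (fun w => _ * _), sum_div]
  simp only [lap_one_add_smul]
  rw [add_sub_right_comm, ← sum_sub_distrib, mul_div_assoc', mul_add, mul_sum]
  congr 2
  -- the first-order terms of `Ω^ψ` and of `Δ(g Δ^ψ g) / g` cancel in each summand
  · refine sum_congr rfl fun w _ => ?_
    have hw := hg w
    simp only [psiLapQuot, Pi.add_apply, Pi.one_apply, Pi.smul_apply, smul_eq_mul] at hw hv ⊢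
    field_simp
    ring
  · ring

theorem continuousAt_psiLapRem {ψ : ℝ → ℝ} (hE : ContinuousAt (dslope (dslope ψ 1) 1) 1)
    (f : V → ℝ) (u : V) : ContinuousAt (fun ε => psiLapRem Adj ψ f ε u) 0 := by
  have hE' := fun x => continuousAt_ratio_one_add_smul f x u hE
  unfold psiLapRem
  simp only [Pi.add_apply, Pi.one_apply, Pi.smul_apply, smul_eq_mul] at hE' ⊢
  fun_prop (disch := simp)

theorem continuousAt_psiLapQuot {ψ : ℝ → ℝ} (hE : ContinuousAt (dslope (dslope ψ 1) 1) 1)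
    (f : V → ℝ) (u : V) : ContinuousAt (fun ε => psiLapQuot Adj ψ f ε u) 0 := by
  have := continuousAt_psiLapRem (Adj := Adj) hE f u
  unfold psiLapQuot
  simp only [Pi.add_apply, Pi.one_apply, Pi.smul_apply, smul_eq_mul]
  fun_prop (disch := simp)

theorem continuousAt_gamma2PsiQuot {ψ : ℝ → ℝ} (hE : ContinuousAt (dslope (dslope ψ 1) 1) 1)
    (hQ : ContinuousAt (dslope (fun x => x * deriv ψ x) 1) 1) (f : V → ℝ) (v : V) :
    ContinuousAt (fun ε => gamma2PsiQuot Adj ψ f ε v) 0 := by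
  have hR := continuousAt_psiLapRem (Adj := Adj) hE f
  have hP := continuousAt_psiLapQuot (Adj := Adj) hE f v
  have hQ' := fun w => continuousAt_ratio_one_add_smul f w v hQ
  unfold gamma2PsiQuot
  simp only [Pi.add_apply, Pi.one_apply, Pi.smul_apply, smul_eq_mul] at hQ' ⊢
  fun_prop (disch := simp)

theorem gamma2PsiQuot_zero {ψ : ℝ → ℝ} (hψ : ∀ᶠ x in 𝓝 1, DifferentiableAt ℝ ψ x)
    (hψ' : DifferentiableAt ℝ (deriv ψ) 1) (f : V → ℝ) (v : V) :
    gamma2PsiQuot Adj ψ f 0 v = -deriv (deriv ψ) 1 * gamma2F Adj f v := by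
  have hE : dslope (dslope ψ 1) 1 1 = deriv (deriv ψ) 1 / 2 := by
    rw [dslope_same, (hasDerivAt_dslope_same hψ hψ').deriv]
  have hQ : dslope (fun x => x * deriv ψ x) 1 1 = deriv ψ 1 + deriv (deriv ψ) 1 := by
    rw [dslope_same, ((hasDerivAt_id' 1).fun_mul hψ'.hasDerivAt).deriv, one_mul, one_mul]
  have hR : ∀ u, psiLapRem Adj ψ f 0 u = deriv (deriv ψ) 1 * gammaF Adj f u := by
    intro u
    simp only [psiLapRem, zero_smul, add_zero, Pi.one_apply, div_one, div_self one_ne_zero, hE]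
    rw [← mul_sum, ← two_mul_gammaF_eq]
    ring
  have hL : lap Adj f v * (deriv ψ 1 * lap Adj f v)
      = ∑ w ∈ univ.filter (Adj v), deriv ψ 1 * lap Adj f v * (f w - f v) := by
    rw [← mul_sum, ← lap_eq_sum]; ring
  rw [gamma2PsiQuot, psiLapQuot, zero_mul, add_zero]
  simp only [zero_smul, add_zero, Pi.one_apply, div_one, mul_one, hR, hQ]
  rw [hL, ← sum_add_distrib, ← mul_div_cancel_left₀ (gamma2F Adj f v) two_ne_zero,
    two_mul_gamma2F_eq, mul_div_assoc', mul_sum]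
  congr 1
  exact sum_congr rfl fun w _ => by ring

theorem tendsto_psiLap_one_add_smul {ψ : ℝ → ℝ} (hψ : ∀ᶠ x in 𝓝 1, DifferentiableAt ℝ ψ x)
    (hψ' : DifferentiableAt ℝ (deriv ψ) 1) (f : V → ℝ) (u : V) :
    Tendsto (fun ε => ε⁻¹ * psiLap Adj ψ (1 + ε • f) u) (𝓝[≠] 0)
      (𝓝 (deriv ψ 1 * lap Adj f u)) := by
  have hE := continuousAt_dslope_same.2 (hasDerivAt_dslope_same hψ hψ').differentiableAt
  have hlim : Tendsto (fun ε => psiLapQuot Adj ψ f ε u) (𝓝[≠] 0) (𝓝 (deriv ψ 1 * lap Adj f u)) := by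
    simpa [psiLapQuot] using (continuousAt_psiLapQuot hE f u).tendsto.mono_left nhdsWithin_le_nhds
  refine hlim.congr' ?_
  filter_upwards [nhdsWithin_le_nhds (eventually_one_add_smul_pos f), self_mem_nhdsWithin]
    with ε hg (hε : ε ≠ 0)
  rw [psiLap_one_add_smul ψ f (hg u).ne', inv_mul_cancel_left₀ hε]

theorem tendsto_gamma2Psi_one_add_smul {ψ : ℝ → ℝ} (hψ : ∀ᶠ x in 𝓝 1, DifferentiableAt ℝ ψ x)
    (hψ' : DifferentiableAt ℝ (deriv ψ) 1) (f : V → ℝ) (v : V) :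
    Tendsto (fun ε => (ε ^ 2)⁻¹ * gamma2Psi Adj ψ (1 + ε • f) v) (𝓝[≠] 0)
      (𝓝 (-deriv (deriv ψ) 1 * gamma2F Adj f v)) := by
  have hE := continuousAt_dslope_same.2 (hasDerivAt_dslope_same hψ hψ').differentiableAt
  have hQ := continuousAt_dslope_same.2 (differentiableAt_id.mul hψ')
  have hlim := (continuousAt_gamma2PsiQuot (Adj := Adj) hE hQ f v).tendsto.mono_left
    (nhdsWithin_le_nhds (a := 0) (s := {0}ᶜ))
  rw [gamma2PsiQuot_zero hψ hψ'] at hlim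
  refine hlim.congr' ?_
  filter_upwards [nhdsWithin_le_nhds (eventually_one_add_smul_pos f), self_mem_nhdsWithin]
    with ε hg (hε : ε ≠ 0)
  rw [gamma2Psi_one_add_smul ψ f fun u => (hg u).ne', inv_mul_cancel_left₀ (pow_ne_zero 2 hε)]

end Graph

theorem cdpsi_implies_cd_general (Adj : V → V → Prop) [DecidableRel Adj]
    (ψ : ℝ → ℝ) (hψ : ContDiffOn ℝ 2 ψ (Set.Ioi 0))
    (hconc : ConcaveOn ℝ (Set.Ioi 0) ψ)
    (h2 : deriv (deriv ψ) 1 ≠ 0)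
    (d : ℝ)
    (hCD : ∀ f : V → ℝ, (∀ v, 0 < f v) → ∀ v,
      gamma2Psi Adj ψ f v ≥ (1 / d) * (psiLap Adj ψ f v) ^ 2)
    (f : V → ℝ) (v : V) :
    gamma2F Adj f v ≥
      (1 / ((-(deriv (deriv ψ) 1) / (deriv ψ 1) ^ 2) * d)) * (lap Adj f v) ^ 2 := by
  have hdiff : ∀ x ∈ Set.Ioi (0 : ℝ), DifferentiableAt ℝ ψ x := fun x hx =>
    (hψ.differentiableOn (by norm_num)).differentiableAt (Ioi_mem_nhds hx)
  have hψ1 : ∀ᶠ x in 𝓝 (1 : ℝ), DifferentiableAt ℝ ψ x :=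
    Filter.eventually_of_mem (Ioi_mem_nhds one_pos) hdiff
  have hψ' : DifferentiableAt ℝ (deriv ψ) 1 :=
    ((hψ.deriv_of_isOpen (m := 1) isOpen_Ioi (by norm_num)).differentiableOn
      one_ne_zero).differentiableAt (Ioi_mem_nhds one_pos)
  have hb : deriv (deriv ψ) 1 < 0 :=
    (hconc.deriv_deriv_nonpos (Ioi_mem_nhds one_pos) hdiff).lt_of_ne h2
  have hCD' : ∀ᶠ ε in 𝓝[≠] (0 : ℝ), (1 / d) * (ε⁻¹ * psiLap Adj ψ (1 + ε • f) v) ^ 2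
      ≤ (ε ^ 2)⁻¹ * gamma2Psi Adj ψ (1 + ε • f) v := by
    filter_upwards [nhdsWithin_le_nhds (eventually_one_add_smul_pos f)] with ε hg
    calc (1 / d) * (ε⁻¹ * psiLap Adj ψ (1 + ε • f) v) ^ 2
        = (ε ^ 2)⁻¹ * ((1 / d) * psiLap Adj ψ (1 + ε • f) v ^ 2) := by ring
      _ ≤ (ε ^ 2)⁻¹ * gamma2Psi Adj ψ (1 + ε • f) v :=
        mul_le_mul_of_nonneg_left (hCD _ hg v) (by positivity)
  have hlim := le_of_tendsto_of_tendsto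
    (((tendsto_psiLap_one_add_smul hψ1 hψ' f v).pow 2).const_mul (1 / d))
    (tendsto_gamma2Psi_one_add_smul hψ1 hψ' f v) hCD'
  rw [ge_iff_le, show 1 / ((-(deriv (deriv ψ) 1) / (deriv ψ 1) ^ 2) * d) * (lap Adj f v) ^ 2
      = (1 / d) * (deriv ψ 1 * lap Adj f v) ^ 2 / -deriv (deriv ψ) 1 by
    simp only [div_eq_mul_inv, mul_inv, inv_inv]; ring, div_le_iff₀ (neg_pos.2 hb)]
  linarith

/-- `CDψ(d,0)` implies the classical condition `CD((−ψ''(1)/ψ'(1)²)·d, 0)`. -/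
theorem cdpsi_implies_cd (Adj : V → V → Prop) [DecidableRel Adj]
    (hsymm : Symmetric Adj) (hloop : ∀ v, ¬Adj v v)
    (ψ : ℝ → ℝ) (hψ : ContDiffOn ℝ 2 ψ (Set.Ioi 0))
    (hconc : ConcaveOn ℝ (Set.Ioi 0) ψ)
    (h1 : deriv ψ 1 ≠ 0) (h2 : deriv (deriv ψ) 1 ≠ 0)
    (d : ℝ) (hd : 0 < d)
    (hCD : ∀ f : V → ℝ, (∀ v, 0 < f v) → ∀ v,
      gamma2Psi Adj ψ f v ≥ (1 / d) * (psiLap Adj ψ f v) ^ 2)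
    (f : V → ℝ) (v : V) :
    gamma2F Adj f v ≥
      (1 / ((-(deriv (deriv ψ) 1) / (deriv ψ 1) ^ 2) * d)) * (lap Adj f v) ^ 2 :=
  cdpsi_implies_cd_general Adj ψ hψ hconc h2 d hCD f v
end
end

section
/- Monotonicity of the heat operator: if G is a finite graph, g, F : V × (0,T] → ℝ are differentiable in time with g ≥ 0, and F attains a maximum over V × (0,T] at (x₀,t₀), then 𝓛(g)·F(x₀,t₀) ≥ 𝓛(gF)(x₀,t₀), where 𝓛 = Δ − ∂_t with Δ acting in the space variable. -/
/-! At a space-time maximum `(x₀, t₀)` of `F`, every neighbour `w` has `F w ≤ F x₀`, so with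
`g ≥ 0` the Laplacian gives `Δ(gF) ≤ (Δg) F`; and since the maximum is approached from earlier
times, `∂ₜF ≥ 0`, so the product rule gives `∂ₜ(gF) ≥ (∂ₜg) F`. -/

noncomputable section

open Finset Filter

variable {V : Type*} [Fintype V]

theorem IsLocalMaxOn.derivWithin_nonneg_of_Icc_subset {f : ℝ → ℝ} {s : Set ℝ} {a b : ℝ}
    (h : IsLocalMaxOn f s b) (hab : a < b) (hs : Set.Icc a b ⊆ s) :
    0 ≤ derivWithin f s b := by
  have hcone : a - b ∈ posTangentConeAt s b :=
    sub_mem_posTangentConeAt_of_segment_subset (by rwa [segment_symm, segment_eq_Icc hab.le])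
  have hnonpos := h.fderivWithin_nonpos hcone
  rw [← mul_one (a - b), ← smul_eq_mul, ContinuousLinearMap.map_smul, smul_eq_mul] at hnonpos
  exact nonneg_of_mul_nonpos_right hnonpos (sub_neg.2 hab)

theorem lap_mul_le_lap_mul_of_nonneg_of_le (Adj : V → V → Prop) [DecidableRel Adj] {g F : V → ℝ}
    {v : V} (hg : ∀ w, Adj v w → 0 ≤ g w) (hF : ∀ w, Adj v w → F w ≤ F v) :
    lap Adj (fun w => g w * F w) v ≤ lap Adj g v * F v := by
  rw [lap, lap, Finset.sum_mul]
  refine Finset.sum_le_sum fun w _ => ?_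
  split_ifs with hvw
  · linarith [mul_le_mul_of_nonneg_left (hF w hvw) (hg w hvw)]
  · simp

theorem heat_monotonicity_general (Adj : V → V → Prop) [DecidableRel Adj]
    (T : ℝ)
    (g F : V → ℝ → ℝ)
    (hg : ∀ v, DifferentiableOn ℝ (g v) (Set.Ioc 0 T))
    (hF : ∀ v, DifferentiableOn ℝ (F v) (Set.Ioc 0 T))
    (hgnn : ∀ v, ∀ t ∈ Set.Ioc (0:ℝ) T, 0 ≤ g v t)
    (x₀ : V) (t₀ : ℝ) (ht₀ : t₀ ∈ Set.Ioc (0:ℝ) T)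
    (hmax : ∀ v, ∀ t ∈ Set.Ioc (0:ℝ) T, F v t ≤ F x₀ t₀) :
    (lap Adj (fun v => g v t₀) x₀ - derivWithin (g x₀) (Set.Ioc 0 T) t₀) * F x₀ t₀ ≥
      lap Adj (fun v => g v t₀ * F v t₀) x₀
        - derivWithin (fun t => g x₀ t * F x₀ t) (Set.Ioc 0 T) t₀ := by
  set s := Set.Ioc (0:ℝ) T
  have hFt : 0 ≤ derivWithin (F x₀) s t₀ :=
    (isMaxOn_iff.2 (hmax x₀)).localize.derivWithin_nonneg_of_Icc_subset
      (half_lt_self ht₀.1) fun t ht => ⟨(half_pos ht₀.1).trans_le ht.1, ht.2.trans ht₀.2⟩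
  have hlap : lap Adj (fun v => g v t₀ * F v t₀) x₀ ≤ lap Adj (fun v => g v t₀) x₀ * F x₀ t₀ :=
    lap_mul_le_lap_mul_of_nonneg_of_le Adj (fun w _ => hgnn w t₀ ht₀) fun w _ => hmax w t₀ ht₀
  rw [derivWithin_fun_mul (hg x₀ t₀ ht₀) (hF x₀ t₀ ht₀)]
  linarith [mul_nonneg (hgnn x₀ t₀ ht₀) hFt]

/-- Monotonicity of the heat operator at a maximum point of `F`. -/
theorem heat_monotonicity (Adj : V → V → Prop) [DecidableRel Adj]
    (hsymm : Symmetric Adj) (hloop : ∀ v, ¬Adj v v)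
    (T : ℝ) (hT : 0 < T)
    (g F : V → ℝ → ℝ)
    (hg : ∀ v, DifferentiableOn ℝ (g v) (Set.Ioc 0 T))
    (hF : ∀ v, DifferentiableOn ℝ (F v) (Set.Ioc 0 T))
    (hgnn : ∀ v, ∀ t ∈ Set.Ioc (0:ℝ) T, 0 ≤ g v t)
    (x₀ : V) (t₀ : ℝ) (ht₀ : t₀ ∈ Set.Ioc (0:ℝ) T)
    (hmax : ∀ v, ∀ t ∈ Set.Ioc (0:ℝ) T, F v t ≤ F x₀ t₀) :
    (lap Adj (fun v => g v t₀) x₀ - derivWithin (g x₀) (Set.Ioc 0 T) t₀) * F x₀ t₀ ≥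
      lap Adj (fun v => g v t₀ * F v t₀) x₀
        - derivWithin (fun t => g x₀ t * F x₀ t) (Set.Ioc 0 T) t₀ :=
  heat_monotonicity_general Adj T g F hg hF hgnn x₀ t₀ ht₀ hmax
end
end

section
/- ψ-Li-Yau inequality: if a finite graph G satisfies CDψ(d,0) and u is a positive solution of the heat equation on G, then −Δ^ψ u(x,t) ≤ d/(2t) for all vertices x and all t > 0. -/
/-!
Maximum principle for `F(v, s) = s · (−Δ^ψ u)(v, s)` on `V × [0, t]`. Along the heat flow
`∂ₛ Δ^ψ u = Ω^ψ u`, so at a maximum point `(v₀, s₀)` with `s₀ > 0` maximality in time gives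
`−Δ^ψ u ≥ s₀ Ω^ψ u`. Maximality in space makes `Δ^ψ u(·, s₀)` minimal at `v₀`, whence
`Δ(u Δ^ψ u)(v₀) ≥ Δu(v₀) Δ^ψ u(v₀)`, and `CDψ(d,0)` reduces to `Ω^ψ u ≥ (2/d) (Δ^ψ u)²`.
Together, `−Δ^ψ u ≥ (2 s₀ / d) (Δ^ψ u)²` at `(v₀, s₀)`, that is `F(v₀, s₀) ≤ d / 2`.
-/

noncomputable section

open Finset Filter

variable {V : Type*} [Fintype V]

open Set

lemma HasDerivAt.nonneg_of_isMaxOn_Icc {f : ℝ → ℝ} {f' a c : ℝ} (hf : HasDerivAt f f' c)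
    (hac : a < c) (hmax : IsMaxOn f (Icc a c) c) : 0 ≤ f' := by
  have hcone : a - c ∈ posTangentConeAt (Icc a c) c :=
    sub_mem_posTangentConeAt_of_segment_subset (segment_symm ℝ c a ▸ segment_subset_Icc hac.le)
  have hdir := hmax.localize.hasFDerivWithinAt_nonpos hf.hasFDerivAt.hasFDerivWithinAt hcone
  simp only [ContinuousLinearMap.toSpanSingleton_apply, smul_eq_mul] at hdir
  exact nonneg_of_mul_nonpos_right hdir (sub_neg.2 hac)

lemma exists_forall_le_of_isCompact {ι X : Type*} [Finite ι] [Nonempty ι] [TopologicalSpace X]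
    {K : Set X} (hK : IsCompact K) (hne : K.Nonempty) {F : ι → X → ℝ}
    (hF : ∀ i, ContinuousOn (F i) K) : ∃ i₀, ∃ x₀ ∈ K, ∀ i, ∀ x ∈ K, F i x ≤ F i₀ x₀ := by
  choose x hxK hx using fun i => hK.exists_isMaxOn hne (hF i)
  obtain ⟨i₀, hi₀⟩ := Finite.exists_max fun i => F i (x i)
  exact ⟨i₀, x i₀, hxK i₀, fun i y hy => (hx i hy).trans (hi₀ i)⟩

section Laplacian

variable (Adj : V → V → Prop) [DecidableRel Adj]

lemma lap_mul_le_lap_mul_of_isMinOn {f g : V → ℝ} {v : V} (hf : ∀ w, 0 ≤ f w)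
    (hg : IsMinOn g univ v) : lap Adj f v * g v ≤ lap Adj (fun w => f w * g w) v := by
  rw [lap, lap, Finset.sum_mul]
  refine Finset.sum_le_sum fun w _ => ?_
  split_ifs
  · nlinarith [hf w, isMinOn_univ_iff.1 hg w]
  · rw [zero_mul]

lemma two_div_mul_sq_psiLap_le_omegaPsi {ψ : ℝ → ℝ} {d : ℝ} {f : V → ℝ} {v : V}
    (hf : ∀ w, 0 < f w) (hCD : gamma2Psi Adj ψ f v ≥ (1 / d) * (psiLap Adj ψ f v) ^ 2)
    (hmin : IsMinOn (psiLap Adj ψ f) univ v) :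
    2 / d * psiLap Adj ψ f v ^ 2 ≤ omegaPsi Adj ψ f v := by
  have hspace := lap_mul_le_lap_mul_of_isMinOn Adj (fun w => (hf w).le) hmin
  have hdiv : lap Adj f v * psiLap Adj ψ f v / f v
      ≤ lap Adj (fun w => f w * psiLap Adj ψ f w) v / f v :=
    div_le_div_of_nonneg_right hspace (hf v).le
  rw [gamma2Psi, ge_iff_le] at hCD
  linarith [show 2 / d * psiLap Adj ψ f v ^ 2 = 2 * (1 / d * psiLap Adj ψ f v ^ 2) by ring]

lemma continuousOn_psiLap {ψ : ℝ → ℝ} (hψ : ContinuousOn ψ (Ioi 0)) {u : V → ℝ → ℝ}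
    {S : Set ℝ} (hu : ∀ v, ContinuousOn (u v) S) (hpos : ∀ v, ∀ s ∈ S, 0 < u v s) (v : V) :
    ContinuousOn (fun s => psiLap Adj ψ (fun w => u w s) v) S := by
  have hquot : ∀ w, ContinuousOn (fun s => ψ (u w s / u v s)) S := fun w =>
    hψ.comp ((hu w).div (hu v) fun s hs => (hpos v s hs).ne')
      fun s hs => div_pos (hpos w s hs) (hpos v s hs)
  refine continuousOn_finsetSum _ fun w _ => ?_
  split_ifs
  · exact (hquot w).sub (hquot v)
  · exact continuousOn_const

lemma hasDerivAt_psiLap_of_heat {ψ : ℝ → ℝ} (hψ : DifferentiableOn ℝ ψ (Ioi 0))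
    {u : V → ℝ → ℝ} {s : ℝ} (hpos : ∀ v, 0 < u v s)
    (hheat : ∀ v, HasDerivAt (u v) (lap Adj (fun w => u w s) v) s) (v : V) :
    HasDerivAt (fun r => psiLap Adj ψ (fun w => u w r) v)
      (omegaPsi Adj ψ (fun w => u w s) v) s := by
  have hquot : ∀ w, HasDerivAt (fun r => ψ (u w r / u v r))
      (deriv ψ (u w s / u v s) * (u w s / u v s) *
        (lap Adj (fun w => u w s) w / u w s - lap Adj (fun w => u w s) v / u v s)) s := by
    intro w
    have hψw := (hψ.differentiableAt (Ioi_mem_nhds (div_pos (hpos w) (hpos v)))).hasDerivAt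
    refine (hψw.comp s ((hheat w).div (hheat v) (hpos v).ne')).congr_deriv ?_
    field_simp [(hpos w).ne', (hpos v).ne']
  refine HasDerivAt.fun_sum fun w _ => ?_
  split_ifs
  · exact (hquot w).sub (hquot v)
  · exact hasDerivAt_const _ _

lemma mul_neg_psiLap_le_of_isMaxOn {ψ : ℝ → ℝ} (hψ : DifferentiableOn ℝ ψ (Ioi 0))
    {d : ℝ} (hd : 0 < d) {u : V → ℝ → ℝ} {s₀ : ℝ} {v₀ : V} (hs₀ : 0 < s₀)
    (hpos : ∀ v, 0 < u v s₀) (hheat : ∀ v, HasDerivAt (u v) (lap Adj (fun w => u w s₀) v) s₀)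
    (hCD : gamma2Psi Adj ψ (fun w => u w s₀) v₀
      ≥ (1 / d) * (psiLap Adj ψ (fun w => u w s₀) v₀) ^ 2)
    (hmax : ∀ v, ∀ s ∈ Icc 0 s₀, s * -psiLap Adj ψ (fun w => u w s) v
      ≤ s₀ * -psiLap Adj ψ (fun w => u w s₀) v₀) :
    s₀ * -psiLap Adj ψ (fun w => u w s₀) v₀ ≤ d / 2 := by
  set P := psiLap Adj ψ (fun w => u w s₀) v₀
  set Ω := omegaPsi Adj ψ (fun w => u w s₀) v₀
  have htime : 0 ≤ 1 * -P + s₀ * -Ω :=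
    ((hasDerivAt_id s₀).mul (hasDerivAt_psiLap_of_heat Adj hψ hpos hheat v₀).neg
      ).nonneg_of_isMaxOn_Icc hs₀ (hmax v₀)
  have hspace : IsMinOn (psiLap Adj ψ (fun w => u w s₀)) univ v₀ :=
    isMinOn_univ_iff.2 fun w => by
      have hw := hmax w s₀ ⟨hs₀.le, le_rfl⟩
      nlinarith
  have hcurv : 2 / d * P ^ 2 ≤ Ω := two_div_mul_sq_psiLap_le_omegaPsi Adj hpos hCD hspace
  have hLiYau : 2 * s₀ * P ^ 2 ≤ d * -P := by
    have hd2 : d * (2 / d * P ^ 2) = 2 * P ^ 2 := by field_simp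
    nlinarith [mul_le_mul_of_nonneg_left hcurv (mul_pos hd hs₀).le]
  by_contra! hgt
  have hneg : 0 < -P := pos_of_mul_pos_right (by linarith : 0 < s₀ * -P) hs₀.le
  nlinarith [mul_lt_mul_of_pos_right hgt hneg]

end Laplacian

theorem psi_li_yau_general (Adj : V → V → Prop) [DecidableRel Adj]
    (ψ : ℝ → ℝ) (hψ : ContDiffOn ℝ 1 ψ (Set.Ioi 0))
    (d : ℝ) (hd : 0 < d)
    (hCD : ∀ f : V → ℝ, (∀ v, 0 < f v) → ∀ v,
      gamma2Psi Adj ψ f v ≥ (1 / d) * (psiLap Adj ψ f v) ^ 2)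
    (u : V → ℝ → ℝ) (hu : ∀ v, Differentiable ℝ (u v))
    (hpos : ∀ v t, 0 ≤ t → 0 < u v t)
    (hheat : ∀ v, ∀ t : ℝ, 0 ≤ t → deriv (u v) t = lap Adj (fun w => u w t) v)
    (x : V) (t : ℝ) (ht : 0 < t) :
    -psiLap Adj ψ (fun w => u w t) x ≤ d / (2 * t) := by
  have hV : Nonempty V := ⟨x⟩
  have hderiv : ∀ v, ∀ s, 0 ≤ s → HasDerivAt (u v) (lap Adj (fun w => u w s) v) s :=
    fun v s hs => hheat v s hs ▸ (hu v s).hasDerivAt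
  have hcont : ∀ v, ContinuousOn (fun s => s * -psiLap Adj ψ (fun w => u w s) v) (Icc 0 t) :=
    fun v => continuousOn_id.mul (continuousOn_psiLap Adj hψ.continuousOn
      (fun w => (hu w).continuous.continuousOn) (fun w s hs => hpos w s hs.1) v).neg
  obtain ⟨v₀, s₀, hs₀, hmax⟩ :=
    exists_forall_le_of_isCompact isCompact_Icc (nonempty_Icc.2 ht.le) hcont
  have hbound : s₀ * -psiLap Adj ψ (fun w => u w s₀) v₀ ≤ d / 2 := by
    rcases hs₀.1.eq_or_lt with rfl | hs₀pos
    · rw [zero_mul]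
      positivity
    · exact mul_neg_psiLap_le_of_isMaxOn Adj (hψ.differentiableOn one_ne_zero) hd hs₀pos
        (fun v => hpos v s₀ hs₀.1) (fun v => hderiv v s₀ hs₀.1)
        (hCD _ (fun v => hpos v s₀ hs₀.1) v₀)
        (fun v s hs => hmax v s ⟨hs.1, hs.2.trans hs₀.2⟩)
  rw [le_div_iff₀ (by positivity)]
  linarith [(hmax x t ⟨ht.le, le_rfl⟩).trans hbound]

/-- ψ-Li-Yau inequality: under `CDψ(d,0)`, every positive solution of the heat
equation satisfies `−Δ^ψ u(x,t) ≤ d/(2t)`. -/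
theorem psi_li_yau (Adj : V → V → Prop) [DecidableRel Adj]
    (hsymm : Symmetric Adj) (hloop : ∀ v, ¬Adj v v)
    (ψ : ℝ → ℝ) (hψ : ContDiffOn ℝ 1 ψ (Set.Ioi 0))
    (d : ℝ) (hd : 0 < d)
    (hCD : ∀ f : V → ℝ, (∀ v, 0 < f v) → ∀ v,
      gamma2Psi Adj ψ f v ≥ (1 / d) * (psiLap Adj ψ f v) ^ 2)
    (u : V → ℝ → ℝ) (hu : ∀ v, Differentiable ℝ (u v))
    (hpos : ∀ v t, 0 ≤ t → 0 < u v t)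
    (hheat : ∀ v, ∀ t : ℝ, 0 ≤ t → deriv (u v) t = lap Adj (fun w => u w t) v)
    (x : V) (t : ℝ) (ht : 0 < t) :
    -psiLap Adj ψ (fun w => u w t) x ≤ d / (2 * t) :=
  psi_li_yau_general Adj ψ hψ d hd hCD u hu hpos hheat x t ht
end
end

section
/- Minimal integral estimate: for real T₁ < T₂, a continuous γ : [T₁,T₂] → [0,∞), and positive constants C₁, C₂, one has inf_{s∈[T₁,T₂]} ( C₂·√γ(s) − C₁·∫_s^{T₂} γ(t) dt ) ≤ C₂²/(C₁(T₂−T₁)). -/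
noncomputable section

open Finset Filter

variable {V : Type*} [Fintype V]

/-! If every value exceeded `M = C₂² / (C₁ (T₂ - T₁))`, then `G s = M + C₁ ∫_s^{T₂} γ` would be
positive with `G² ≤ C₂² γ = -(C₂² / C₁) G'`. This Riccati inequality makes `1 / G` grow with slope
at least `C₁ / C₂²`, so `1 / G T₂ > C₁ (T₂ - T₁) / C₂² = 1 / M`, contradicting `G T₂ = M`. -/

lemma Real.sInf_le_of_mem_of_le {s : Set ℝ} {x M : ℝ} (hxs : x ∈ s) (hxM : x ≤ M) (hM : 0 ≤ M) :
    sInf s ≤ M := by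
  by_cases hs : BddBelow s
  · exact csInf_le_of_le hs hxs hxM
  · exact (Real.sInf_of_not_bddBelow hs).trans_le hM

section TailIntegral

variable {γ : ℝ → ℝ} {a b : ℝ}

lemma continuousOn_integral_left_of_continuousOn (hab : a ≤ b)
    (hγ : ContinuousOn γ (Set.Icc a b)) :
    ContinuousOn (fun s => ∫ t in s..b, γ t) (Set.Icc a b) := by
  rw [← Set.uIcc_of_le hab] at hγ ⊢
  exact intervalIntegral.continuousOn_primitive_interval_left hγ.integrableOn_uIcc

lemma hasDerivAt_integral_left_of_continuousOn (hγ : ContinuousOn γ (Set.Icc a b)) {s : ℝ}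
    (hs : s ∈ Set.Ioo a b) : HasDerivAt (fun u => ∫ t in u..b, γ t) (-γ s) s := by
  have hsb : Set.uIcc s b ⊆ Set.Icc a b := by
    rw [Set.uIcc_of_le hs.2.le]
    exact Set.Icc_subset_Icc_left hs.1.le
  exact intervalIntegral.integral_hasDerivAt_left ((hγ.mono hsb).intervalIntegrable)
    ((hγ.mono Set.Ioo_subset_Icc_self).stronglyMeasurableAtFilter isOpen_Ioo s hs)
    (hγ.continuousAt (Icc_mem_nhds hs.1 hs.2))

end TailIntegral

/-- `t ↦ 1 / G t - k t` is monotone, since `(1 / G)' = -G' / G² ≥ k`. -/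
lemma mul_sub_lt_inv_of_hasDerivAt_le_neg_mul_sq {G G' : ℝ → ℝ} {a b k : ℝ} (hab : a ≤ b)
    (hG : ContinuousOn G (Set.Icc a b)) (hG_pos : ∀ t ∈ Set.Icc a b, 0 < G t)
    (hG' : ∀ t ∈ Set.Ioo a b, HasDerivAt G (G' t) t)
    (hriccati : ∀ t ∈ Set.Ioo a b, G' t ≤ -k * G t ^ 2) :
    k * (b - a) < (G b)⁻¹ := by
  have hmono : MonotoneOn (fun t => (G t)⁻¹ - k * t) (Set.Icc a b) := by
    refine monotoneOn_of_hasDerivWithinAt_nonneg (convex_Icc a b)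
      ((hG.inv₀ fun t ht => (hG_pos t ht).ne').sub (continuousOn_const.mul continuousOn_id))
      (f' := fun t => -G' t / G t ^ 2 - k) (fun t ht => ?_) (fun t ht => ?_)
    all_goals
      rw [interior_Icc] at ht
      have hGt := hG_pos t (Set.Ioo_subset_Icc_self ht)
    · exact ((((hG' t ht).inv hGt.ne').sub ((hasDerivAt_id t).const_mul k)).congr_deriv
        (by ring)).hasDerivWithinAt
    · rw [sub_nonneg, le_div_iff₀ (by positivity)]
      linarith [hriccati t ht]
  have hH := hmono ⟨le_rfl, hab⟩ ⟨hab, le_rfl⟩ hab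
  have hGa := inv_pos.2 (hG_pos a ⟨le_rfl, hab⟩)
  simp only at hH
  linarith

/-- Minimal integral estimate. -/
theorem minimal_integral_estimate (T₁ T₂ C₁ C₂ : ℝ) (hT : T₁ < T₂)
    (hC₁ : 0 < C₁) (hC₂ : 0 < C₂)
    (γ : ℝ → ℝ) (hcont : ContinuousOn γ (Set.Icc T₁ T₂))
    (hnn : ∀ t ∈ Set.Icc T₁ T₂, 0 ≤ γ t) :
    sInf ((fun s => C₂ * Real.sqrt (γ s) - C₁ * ∫ t in s..T₂, γ t) '' Set.Icc T₁ T₂)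
      ≤ C₂ ^ 2 / (C₁ * (T₂ - T₁)) := by
  set M := C₂ ^ 2 / (C₁ * (T₂ - T₁))
  have hM : 0 < M := div_pos (by positivity) (mul_pos hC₁ (sub_pos.2 hT))
  suffices ∃ s ∈ Set.Icc T₁ T₂, C₂ * Real.sqrt (γ s) - C₁ * ∫ t in s..T₂, γ t ≤ M by
    obtain ⟨s, hs, hsM⟩ := this
    exact Real.sInf_le_of_mem_of_le ⟨s, hs, rfl⟩ hsM hM.le
  by_contra! hgt
  set G := fun s => M + C₁ * ∫ t in s..T₂, γ t
  have hG_pos : ∀ s ∈ Set.Icc T₁ T₂, 0 < G s := fun s hs =>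
    add_pos_of_pos_of_nonneg hM <| mul_nonneg hC₁.le <|
      intervalIntegral.integral_nonneg hs.2 fun t ht => hnn t ⟨hs.1.trans ht.1, ht.2⟩
  have hG_sq : ∀ s ∈ Set.Icc T₁ T₂, G s ^ 2 ≤ C₂ ^ 2 * γ s := fun s hs => by
    have hGs : G s ≤ C₂ * Real.sqrt (γ s) := by linarith [hgt s hs]
    calc G s ^ 2 ≤ (C₂ * Real.sqrt (γ s)) ^ 2 := pow_le_pow_left₀ (hG_pos s hs).le hGs 2
      _ = C₂ ^ 2 * γ s := by rw [mul_pow, Real.sq_sqrt (hnn s hs)]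
  have hdecay := mul_sub_lt_inv_of_hasDerivAt_le_neg_mul_sq (G := G) (k := C₁ / C₂ ^ 2) hT.le
    (continuousOn_const.add (continuousOn_const.mul
      (continuousOn_integral_left_of_continuousOn hT.le hcont))) hG_pos
    (fun s hs => ((hasDerivAt_integral_left_of_continuousOn hcont hs).const_mul C₁).const_add M)
    (fun s hs => by
      have h := hG_sq s (Set.Ioo_subset_Icc_self hs)
      rw [neg_mul, mul_neg, neg_le_neg_iff, div_mul_eq_mul_div, div_le_iff₀ (by positivity)]
      nlinarith)
  have hGT₂ : (G T₂)⁻¹ = C₁ / C₂ ^ 2 * (T₂ - T₁) := by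
    simp only [G, intervalIntegral.integral_same, mul_zero, add_zero, M]
    field_simp
  exact hdecay.ne hGT₂.symm
end
end

section
/- Estimate of Γ^ψ: for a concave ψ ∈ C¹((0,∞)), a finite graph G, a positive function f, and adjacent vertices v ∼ w, one has log(f(w)/f(v)) ≤ √H_ψ · √(Γ^ψ(f)(v)), where H_ψ = sup_{x>1} (log x)²/ψ̄(x) and ψ̄(x) = ψ'(1)(x−1) − (ψ(x)−ψ(1)) (interpreted as +∞ if the supremum is infinite, in which case the statement is trivial; assume H_ψ < ∞). -/
/-! Concavity puts `ψ` below its tangent line at `1`, so `ψ̄ ≥ 0` on `(0, ∞)`. Hence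
`Γ^ψ(f)(v)` is a sum of nonnegative terms and dominates the single term `ψ̄(f w / f v)`, which
by the definition of `H_ψ` controls `(log (f w / f v))²` whenever `f w > f v`. -/

noncomputable section

open Finset Filter

variable {V : Type*} [Fintype V]

lemma ConcaveOn.le_add_deriv_mul_sub {S : Set ℝ} {g : ℝ → ℝ} {a x : ℝ} (hg : ConcaveOn ℝ S g)
    (ha : a ∈ S) (hx : x ∈ S) (hda : DifferentiableAt ℝ g a) :
    g x ≤ g a + deriv g a * (x - a) := by
  rcases lt_trichotomy x a with hxa | rfl | hax
  · have hslope := hg.deriv_le_slope hx ha hxa hda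
    rw [slope_def_field, le_div_iff₀ (sub_pos.mpr hxa)] at hslope
    linarith
  · simp
  · have hslope := hg.slope_le_deriv ha hx hax hda
    rw [slope_def_field, div_le_iff₀ (sub_pos.mpr hax)] at hslope
    linarith

lemma psibar_one (ψ : ℝ → ℝ) : psibar ψ 1 = 0 := by
  simp [psibar]

lemma psibar_nonneg {ψ : ℝ → ℝ} (hconc : ConcaveOn ℝ (Set.Ioi 0) ψ)
    (hd : DifferentiableAt ℝ ψ 1) {x : ℝ} (hx : 0 < x) : 0 ≤ psibar ψ x := by
  have := hconc.le_add_deriv_mul_sub (Set.mem_Ioi.mpr one_pos) (Set.mem_Ioi.mpr hx) hd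
  unfold psibar
  linarith

lemma sub_le_lap_of_adj {Adj : V → V → Prop} [DecidableRel Adj] {g : V → ℝ} {v w : V}
    (hg : ∀ u, Adj v u → g v ≤ g u) (hvw : Adj v w) : g w - g v ≤ lap Adj g v := by
  have hterm : ∀ u ∈ (univ : Finset V), 0 ≤ if Adj v u then g u - g v else 0 := by
    intro u _
    split_ifs with hvu
    · exact sub_nonneg.mpr (hg u hvu)
    · exact le_rfl
  simpa [lap, hvw] using single_le_sum hterm (mem_univ w)

lemma psibar_le_gammaPsi {Adj : V → V → Prop} [DecidableRel Adj] {ψ : ℝ → ℝ}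
    (hconc : ConcaveOn ℝ (Set.Ioi 0) ψ) (hd : DifferentiableAt ℝ ψ 1)
    {f : V → ℝ} (hf : ∀ v, 0 < f v) {v w : V} (hvw : Adj v w) :
    psibar ψ (f w / f v) ≤ gammaPsi Adj ψ f v := by
  have hvv : psibar ψ (f v / f v) = 0 := by rw [div_self (hf v).ne', psibar_one]
  simpa [gammaPsi, hvv] using sub_le_lap_of_adj (g := fun u => psibar ψ (f u / f v))
    (fun u _ => hvv ▸ psibar_nonneg hconc hd (div_pos (hf u) (hf v))) hvw

lemma Real.log_le_sqrt_mul_sqrt {x H y : ℝ} (hx : 0 ≤ x) (hy : 0 ≤ y)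
    (h : 1 < x → Real.log x ^ 2 ≤ H * y) : Real.log x ≤ √H * √y := by
  rcases le_or_gt x 1 with hx1 | hx1
  · exact (Real.log_nonpos hx hx1).trans (by positivity)
  · rw [← Real.sqrt_mul' H hy]
    exact Real.le_sqrt_of_sq_le (h hx1)

theorem gammaPsi_estimate_general (Adj : V → V → Prop) [DecidableRel Adj]
    (ψ : ℝ → ℝ) (hψ : ContDiffOn ℝ 1 ψ (Set.Ioi 0))
    (hconc : ConcaveOn ℝ (Set.Ioi 0) ψ)
    (Hψ : ℝ)
    (hH : ∀ x : ℝ, 1 < x → (Real.log x) ^ 2 ≤ Hψ * psibar ψ x)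
    (f : V → ℝ) (hf : ∀ v, 0 < f v)
    (v w : V) (hvw : Adj v w) :
    Real.log (f w / f v) ≤ Real.sqrt Hψ * Real.sqrt (gammaPsi Adj ψ f v) := by
  have hd : DifferentiableAt ℝ ψ 1 :=
    (hψ.differentiableOn one_ne_zero).differentiableAt (Ioi_mem_nhds one_pos)
  have hx : 0 < f w / f v := div_pos (hf w) (hf v)
  calc Real.log (f w / f v) ≤ √Hψ * √(psibar ψ (f w / f v)) :=
        Real.log_le_sqrt_mul_sqrt hx.le (psibar_nonneg hconc hd hx) (hH _)
    _ ≤ √Hψ * √(gammaPsi Adj ψ f v) := by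
        gcongr
        exact psibar_le_gammaPsi hconc hd hf hvw

/-- Estimate of `Γ^ψ`: for adjacent vertices,
`log(f w / f v) ≤ √H_ψ · √(Γ^ψ(f)(v))`, where `H_ψ` is (a finite bound for) the Harnack
constant `sup_{x>1} (log x)²/ψ̄(x)`. -/
theorem gammaPsi_estimate (Adj : V → V → Prop) [DecidableRel Adj]
    (hsymm : Symmetric Adj) (hloop : ∀ v, ¬Adj v v)
    (ψ : ℝ → ℝ) (hψ : ContDiffOn ℝ 1 ψ (Set.Ioi 0))
    (hconc : ConcaveOn ℝ (Set.Ioi 0) ψ)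
    (Hψ : ℝ) (hH0 : 0 ≤ Hψ)
    (hH : ∀ x : ℝ, 1 < x → (Real.log x) ^ 2 ≤ Hψ * psibar ψ x)
    (f : V → ℝ) (hf : ∀ v, 0 < f v)
    (v w : V) (hvw : Adj v w) :
    Real.log (f w / f v) ≤ Real.sqrt Hψ * Real.sqrt (gammaPsi Adj ψ f v) :=
  gammaPsi_estimate_general Adj ψ hψ hconc Hψ hH f hf v w hvw
end
end

section
/- H_log = 2: the supremum over x > 1 of (log x)² / (x − 1 − log x) equals 2. -/
noncomputable section

open Finset Filter

variable {V : Type*} [Fintype V]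

/-! Substituting `x = eᵗ` turns the ratio into `t² / (eᵗ - 1 - t)` with `t > 0`. Since
`eᵗ - 1 - t ≥ t² / 2` the ratio is at most `2`, and since `eᵗ - 1 - t ≤ t² (1 + t) / 2` for
`t ≤ 1` it is at least `2 / (1 + t)`, so it tends to `2` as `t → 0⁺`. -/

open Real Topology

lemma exp_sub_one_sub_self_pos {t : ℝ} (ht : t ≠ 0) : 0 < exp t - 1 - t := by
  linarith [add_one_lt_exp ht]

lemma exp_sub_one_sub_self_le {t : ℝ} (h0 : 0 ≤ t) (h1 : t ≤ 1) :
    exp t - 1 - t ≤ t ^ 2 / 2 * (1 + t) := by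
  have h := exp_bound' h0 h1 (n := 3) (by norm_num)
  norm_num [Finset.sum_range_succ, Nat.factorial] at h
  nlinarith [pow_nonneg h0 3]

lemma sq_div_exp_sub_one_sub_self_le_two {t : ℝ} (ht : 0 < t) :
    t ^ 2 / (exp t - 1 - t) ≤ 2 := by
  rw [div_le_iff₀ (exp_sub_one_sub_self_pos ht.ne')]
  linarith [quadratic_le_exp_of_nonneg ht.le]

lemma two_div_one_add_le_sq_div_exp_sub_one_sub_self {t : ℝ} (h0 : 0 < t) (h1 : t ≤ 1) :
    2 / (1 + t) ≤ t ^ 2 / (exp t - 1 - t) := calc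
  2 / (1 + t) = t ^ 2 / (t ^ 2 / 2 * (1 + t)) := by field_simp
  _ ≤ t ^ 2 / (exp t - 1 - t) :=
    div_le_div_of_nonneg_left (by positivity) (exp_sub_one_sub_self_pos h0.ne')
      (exp_sub_one_sub_self_le h0.le h1)

lemma tendsto_sq_div_exp_sub_one_sub_self :
    Tendsto (fun t => t ^ 2 / (exp t - 1 - t)) (𝓝[>] 0) (𝓝 2) := by
  have hlower : Tendsto (fun t : ℝ => 2 / (1 + t)) (𝓝[>] 0) (𝓝 2) := by
    have : ContinuousAt (fun t : ℝ => 2 / (1 + t)) 0 := by fun_prop (disch := norm_num)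
    simpa using this.tendsto.mono_left nhdsWithin_le_nhds
  refine tendsto_of_tendsto_of_tendsto_of_le_of_le' hlower tendsto_const_nhds ?_ ?_
  · filter_upwards [Ioc_mem_nhdsGT zero_lt_one] with t ht
    exact two_div_one_add_le_sq_div_exp_sub_one_sub_self ht.1 ht.2
  · filter_upwards [self_mem_nhdsWithin] with t ht
    exact sq_div_exp_sub_one_sub_self_le_two ht

lemma setOf_log_sq_div_eq_image :
    {y : ℝ | ∃ x : ℝ, 1 < x ∧ y = (log x) ^ 2 / (x - 1 - log x)} =
      (fun t => t ^ 2 / (exp t - 1 - t)) '' Set.Ioi 0 := by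
  ext y
  constructor
  · rintro ⟨x, hx, rfl⟩
    exact ⟨log x, log_pos hx, by dsimp only; rw [exp_log (by linarith)]⟩
  · rintro ⟨t, ht, rfl⟩
    exact ⟨exp t, one_lt_exp_iff.mpr ht, by rw [log_exp]⟩

/-- `H_log = 2`. -/
theorem harnack_constant_log :
    IsLUB {y : ℝ | ∃ x : ℝ, 1 < x ∧ y = (Real.log x) ^ 2 / (x - 1 - Real.log x)}
      2 := by
  rw [setOf_log_sq_div_eq_image]
  refine isLUB_of_mem_closure ?_ ?_
  · rintro _ ⟨t, ht, rfl⟩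
    exact sq_div_exp_sub_one_sub_self_le_two ht
  · exact mem_closure_of_tendsto tendsto_sq_div_exp_sub_one_sub_self
      (eventually_mem_nhdsWithin.mono fun t ht => Set.mem_image_of_mem _ ht)
end
end

section
/- H_√ = 8: the supremum over x > 1 of (log x)² / ((x+1)/2 − √x) equals 8. -/
noncomputable section

open Finset Filter

variable {V : Type*} [Fintype V]

/-
Substituting `x = t ^ 2` turns the ratio into `8 * (log t / (t - 1)) ^ 2`. For `t > 1`,
`0 < log t ≤ t - 1` bounds this by `8`, and `log t / (t - 1)` is the difference quotient of
`log` at `1`, which tends to `log' 1 = 1` as `t → 1⁺`.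
-/

namespace Real

open Topology

lemma log_sq_div_half_add_sub_sqrt_of_sq {t : ℝ} (ht : 0 ≤ t) :
    log (t ^ 2) ^ 2 / ((t ^ 2 + 1) / 2 - √(t ^ 2)) = 8 * (log t / (t - 1)) ^ 2 := by
  rw [log_pow, sqrt_sq ht, show (t ^ 2 + 1) / 2 - t = (t - 1) ^ 2 / 2 by ring]
  push_cast
  rw [div_pow, div_div_eq_mul_div]
  ring

lemma sq_log_div_sub_one_le_one {t : ℝ} (ht : 1 < t) : (log t / (t - 1)) ^ 2 ≤ 1 := by
  have hpos : 0 < t - 1 := sub_pos.2 ht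
  refine pow_le_one₀ (div_nonneg (log_nonneg ht.le) hpos.le) ?_
  exact (div_le_one hpos).2 (log_le_sub_one_of_pos (by linarith))

lemma tendsto_log_div_sub_one_nhdsNE_one :
    Tendsto (fun t => log t / (t - 1)) (𝓝[≠] 1) (𝓝 1) := by
  have hslope := hasDerivAt_iff_tendsto_slope.1 (by simpa using hasDerivAt_log one_ne_zero)
  exact hslope.congr fun t => by simp [slope_def_field]

end Real

open Real Topology in
/-- `H_√ = 8`. -/
theorem harnack_constant_sqrt :
    IsLUB {y : ℝ | ∃ x : ℝ, 1 < x ∧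
        y = (Real.log x) ^ 2 / ((x + 1) / 2 - Real.sqrt x)} 8 := by
  refine isLUB_of_mem_closure ?_ ?_
  · rintro y ⟨x, hx, rfl⟩
    obtain ⟨t, ht0, rfl⟩ : ∃ t, 0 ≤ t ∧ t ^ 2 = x :=
      ⟨√x, sqrt_nonneg x, sq_sqrt (by linarith)⟩
    have ht : 1 < t := by nlinarith
    rw [log_sq_div_half_add_sub_sqrt_of_sq ht0]
    linarith [sq_log_div_sub_one_le_one ht]
  · have hlim : Tendsto (fun t => 8 * (log t / (t - 1)) ^ 2) (𝓝[>] 1) (𝓝 8) := by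
      have := tendsto_log_div_sub_one_nhdsNE_one.mono_left (nhdsGT_le_nhdsNE 1)
      simpa using (this.pow 2).const_mul 8
    refine mem_closure_of_tendsto hlim ?_
    filter_upwards [self_mem_nhdsWithin] with t (ht : 1 < t)
    exact ⟨t ^ 2, one_lt_pow₀ ht two_ne_zero,
      (log_sq_div_half_add_sub_sqrt_of_sq (by linarith)).symm⟩
end
end

section
/- Lower bound C_log ≥ 1/2: for all x, y > 0 with xy ≠ 1, the quantity (x+y)·(1/(xy) − 1 + log(xy)) / (log(xy))² is at least 1/2; equivalently inf_{x,y>0} ψ̃(x,y)/(log x + log y)² ≥ 1/2 where ψ̃(x,y) = (1/x + 1/y)(1 − xy) + x(log y + log x) + y(log x + log y) simplifies for ψ = log to (x+y)(1/(xy) − 1 + log(xy)). -/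
noncomputable section

open Finset Filter

variable {V : Type*} [Fintype V]

/-! With `t = log (x y)`, AM-GM gives `x + y ≥ 2 e^{t/2}`, and `e^{-t} - 1 + t ≥ (1 - e^{-t/2})²` by
`e^{-t/2} ≥ 1 - t/2`. The product `e^{t/2} (1 - e^{-t/2})²` equals `4 sinh² (t/4)`, which is at least
`t² / 4` since `|sinh s| ≥ |s|`. -/

namespace Real

theorem sq_le_sinh_sq (t : ℝ) : t ^ 2 ≤ sinh t ^ 2 :=
  sq_le_sq.mpr (by rw [abs_sinh]; exact self_le_sinh_iff.mpr (abs_nonneg t))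

theorem sq_one_sub_exp_neg_half_le (t : ℝ) : (1 - exp (-(t / 2))) ^ 2 ≤ exp (-t) - 1 + t := by
  have hsq : exp (-(t / 2)) ^ 2 = exp (-t) := by rw [← exp_nat_mul]; ring_nf
  nlinarith [add_one_le_exp (-(t / 2))]

theorem exp_half_mul_sq_one_sub_exp_neg_half (t : ℝ) :
    exp (t / 2) * (1 - exp (-(t / 2))) ^ 2 = 4 * sinh (t / 4) ^ 2 := by
  rw [sinh_eq]
  have hhalf : exp (t / 2) = exp (t / 4) ^ 2 := by rw [← exp_nat_mul]; ring_nf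
  have hneg : exp (-(t / 2)) = exp (-(t / 4)) ^ 2 := by rw [← exp_nat_mul]; ring_nf
  have hinv : exp (t / 4) * exp (-(t / 4)) = 1 := by rw [← exp_add]; simp
  rw [hhalf, hneg]
  linear_combination
    (exp (-(t / 4)) ^ 2 * (exp (t / 4) * exp (-(t / 4)) + 1) - 2 * exp (t / 4) * exp (-(t / 4))) * hinv

theorem sq_le_four_mul_exp_half_mul (t : ℝ) : t ^ 2 ≤ 4 * exp (t / 2) * (exp (-t) - 1 + t) :=
  calc t ^ 2 = 16 * (t / 4) ^ 2 := by ring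
    _ ≤ 16 * sinh (t / 4) ^ 2 := mul_le_mul_of_nonneg_left (sq_le_sinh_sq _) (by norm_num)
    _ = 4 * (exp (t / 2) * (1 - exp (-(t / 2))) ^ 2) := by
      rw [exp_half_mul_sq_one_sub_exp_neg_half]; ring
    _ ≤ 4 * exp (t / 2) * (exp (-t) - 1 + t) := by
      rw [mul_assoc]; gcongr; exact sq_one_sub_exp_neg_half_le t

end Real

open Real in
theorem two_mul_exp_half_log_mul_le_add {x y : ℝ} (hx : 0 < x) (hy : 0 < y) :
    2 * exp (log (x * y) / 2) ≤ x + y := by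
  have hsq : exp (log (x * y) / 2) ^ 2 = x * y := by
    rw [← exp_nat_mul, show ((2 : ℕ) : ℝ) * (log (x * y) / 2) = log (x * y) by push_cast; ring,
      exp_log (mul_pos hx hy)]
  nlinarith [sq_nonneg (x - y), exp_pos (log (x * y) / 2)]

/-- Lower bound `C_log ≥ 1/2`. -/
theorem c_log_lower_bound (x y : ℝ) (hx : 0 < x) (hy : 0 < y) (hxy : x * y ≠ 1) :
    (1 : ℝ) / 2 ≤
      (x + y) * (1 / (x * y) - 1 + Real.log (x * y)) / (Real.log (x * y)) ^ 2 := by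
  have ht : Real.log (x * y) ≠ 0 := Real.log_ne_zero_of_pos_of_ne_one (mul_pos hx hy) hxy
  set t := Real.log (x * y) with ht_def
  have hinv : 1 / (x * y) = Real.exp (-t) := by
    rw [Real.exp_neg, ht_def, Real.exp_log (mul_pos hx hy), one_div]
  have hnonneg : 0 ≤ Real.exp (-t) - 1 + t := by linarith [Real.add_one_le_exp (-t)]
  rw [hinv, le_div_iff₀ (by positivity)]
  calc 1 / 2 * t ^ 2 ≤ 1 / 2 * (4 * Real.exp (t / 2) * (Real.exp (-t) - 1 + t)) := by
        gcongr; exact Real.sq_le_four_mul_exp_half_mul t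
    _ = 2 * Real.exp (t / 2) * (Real.exp (-t) - 1 + t) := by ring
    _ ≤ (x + y) * (Real.exp (-t) - 1 + t) :=
        mul_le_mul_of_nonneg_right (two_mul_exp_half_log_mul_le_add hx hy) hnonneg
end
end
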